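/- In distributed softmax regression where each of R regular workers only has samples from one class (and classes are disjoint across workers), evaluating at x = 0 yields ξ ≥ (1 − 1/R)(1 − 1/K) · max_{w∈R} ‖(1/J)Σ_{j=1}^J a^{(w,j)}‖, where ξ is any constant such that ‖∇f_w(x) − ∇f(x)‖ ≤ ξ for all x and all w ∈ R, assuming non-negative features. -/

import Mathlib

/-!
At `x = 0` every softmax probability equals `1/K`, so the gradient of the per-sample loss is the
block vector `(1/K − 1{l = b}) a` and worker `w`'s local gradient is that of its mean feature
`m_w`. In the class-`c_w` block, the difference between `∇f_w(0)` and the average gradient equals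
`−((1 − 1/R)(1 − 1/K) m_w + (1/(RK)) Σ_{v ≠ w} m_v)`, since no other worker carries class `c_w`.
All features being non-negative, this block alone has norm at least `(1 − 1/R)(1 − 1/K) ‖m_w‖`.
-/

/-- The per-sample softmax (cross-entropy) loss. -/
noncomputable def softmaxLoss (K d : ℕ) (a : EuclideanSpace ℝ (Fin d)) (b : Fin K)
    (x : EuclideanSpace ℝ (Fin K × Fin d)) : ℝ :=
  Real.log (∑ l : Fin K, Real.exp (∑ i : Fin d, x (l, i) * a i)) -
    ∑ i : Fin d, x (b, i) * a i

/-- The local cost of a worker with `J` samples `(a j, b j)`. -/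
noncomputable def localCost (K d J : ℕ) (a : Fin J → EuclideanSpace ℝ (Fin d))
    (b : Fin J → Fin K) (x : EuclideanSpace ℝ (Fin K × Fin d)) : ℝ :=
  (J : ℝ)⁻¹ * ∑ j : Fin J, softmaxLoss K d (a j) (b j) x

open InnerProductSpace Real Finset

section Gradient

variable {F : Type*} [NormedAddCommGroup F] [InnerProductSpace ℝ F] [CompleteSpace F]
  {f g : F → ℝ} {f' g' x : F}

theorem hasGradientAt_inner (v : F) : HasGradientAt (fun y => ⟪v, y⟫_ℝ) v x := by
  rw [hasGradientAt_iff_hasFDerivAt]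
  exact (innerSL ℝ v).hasFDerivAt

theorem HasDerivAt.comp_hasGradientAt {h : ℝ → ℝ} {h' : ℝ} (hh : HasDerivAt h h' (f x))
    (hf : HasGradientAt f f' x) : HasGradientAt (fun y => h (f y)) (h' • f') x := by
  rw [hasGradientAt_iff_hasFDerivAt, map_smul]
  exact hh.comp_hasFDerivAt x (hasGradientAt_iff_hasFDerivAt.mp hf)

theorem HasGradientAt.const_mul (c : ℝ) (hf : HasGradientAt f f' x) :
    HasGradientAt (fun y => c * f y) (c • f') x := by
  rw [hasGradientAt_iff_hasFDerivAt, map_smul]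
  exact (hasGradientAt_iff_hasFDerivAt.mp hf).const_mul c

theorem HasGradientAt.sub (hf : HasGradientAt f f' x) (hg : HasGradientAt g g' x) :
    HasGradientAt (fun y => f y - g y) (f' - g') x := by
  rw [hasGradientAt_iff_hasFDerivAt, map_sub]
  exact (hasGradientAt_iff_hasFDerivAt.mp hf).sub (hasGradientAt_iff_hasFDerivAt.mp hg)

theorem HasGradientAt.sum {ι : Type*} {s : Finset ι} {f : ι → F → ℝ} {f' : ι → F}
    (hf : ∀ i ∈ s, HasGradientAt (f i) (f' i) x) :
    HasGradientAt (fun y => ∑ i ∈ s, f i y) (∑ i ∈ s, f' i) x := by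
  rw [hasGradientAt_iff_hasFDerivAt, map_sum]
  exact HasFDerivAt.fun_sum fun i hi => hasGradientAt_iff_hasFDerivAt.mp (hf i hi)

theorem hasGradientAt_log_sum_exp_inner_zero {ι : Type*} [Fintype ι] [Nonempty ι] (v : ι → F) :
    HasGradientAt (fun y => log (∑ i, exp ⟪v i, y⟫_ℝ)) ((Fintype.card ι : ℝ)⁻¹ • ∑ i, v i) 0 := by
  have hsum : HasGradientAt (fun y => ∑ i, exp ⟪v i, y⟫_ℝ) (∑ i, v i) 0 := by
    simpa using HasGradientAt.sum fun i _ => (hasDerivAt_exp _).comp_hasGradientAt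
      (hasGradientAt_inner (x := (0 : F)) (v i))
  have hlog : HasDerivAt log (Fintype.card ι : ℝ)⁻¹ (∑ i, exp ⟪v i, (0 : F)⟫_ℝ) := by
    simpa using hasDerivAt_log (Nat.cast_ne_zero.mpr Fintype.card_ne_zero)
  exact hlog.comp_hasGradientAt (f := fun y => ∑ i, exp ⟪v i, y⟫_ℝ) hsum

end Gradient

theorem EuclideanSpace.norm_le_norm_of_abs_le_comp {ι κ : Type*} [Fintype ι] [Fintype κ]
    {x : EuclideanSpace ℝ ι} {y : EuclideanSpace ℝ κ} {e : ι → κ} (he : e.Injective)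
    (h : ∀ i, |x i| ≤ |y (e i)|) : ‖x‖ ≤ ‖y‖ := by
  rw [EuclideanSpace.norm_eq, EuclideanSpace.norm_eq]
  refine sqrt_le_sqrt ?_
  calc ∑ i, ‖x i‖ ^ 2 ≤ ∑ i, ‖y (e i)‖ ^ 2 :=
        sum_le_sum fun i _ => pow_le_pow_left₀ (norm_nonneg _) (h i) 2
    _ = ∑ k ∈ univ.map ⟨e, he⟩, ‖y k‖ ^ 2 := (sum_map univ ⟨e, he⟩ fun k => ‖y k‖ ^ 2).symm
    _ ≤ ∑ k, ‖y k‖ ^ 2 := sum_le_univ_sum_of_nonneg fun _ => by positivity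

section Softmax

variable {ι κ : Type*} [DecidableEq κ]

def blockEmbed (l : κ) : EuclideanSpace ℝ ι →ₗ[ℝ] EuclideanSpace ℝ (κ × ι) where
  toFun a := WithLp.toLp 2 fun p => if p.1 = l then a p.2 else 0
  map_add' a b := by ext p; by_cases h : p.1 = l <;> simp [h]
  map_smul' c a := by ext p; by_cases h : p.1 = l <;> simp [h]

@[simp]
theorem blockEmbed_apply (l : κ) (a : EuclideanSpace ℝ ι) (p : κ × ι) :
    blockEmbed l a p = if p.1 = l then a p.2 else 0 := rfl

theorem inner_blockEmbed [Fintype ι] [Fintype κ] (l : κ) (a : EuclideanSpace ℝ ι)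
    (x : EuclideanSpace ℝ (κ × ι)) : ⟪blockEmbed l a, x⟫_ℝ = ∑ i, x (l, i) * a i := by
  simp [PiLp.inner_apply, Fintype.sum_prod_type, mul_comm]

end Softmax

noncomputable def softmaxGradZero (K d : ℕ) (b : Fin K) :
    EuclideanSpace ℝ (Fin d) →ₗ[ℝ] EuclideanSpace ℝ (Fin K × Fin d) :=
  (K : ℝ)⁻¹ • ∑ l, blockEmbed l - blockEmbed b

variable {K d : ℕ}

theorem softmaxGradZero_apply (b : Fin K) (a : EuclideanSpace ℝ (Fin d)) (p : Fin K × Fin d) :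
    softmaxGradZero K d b a p = ((K : ℝ)⁻¹ - if p.1 = b then 1 else 0) * a p.2 := by
  simp [softmaxGradZero, sub_mul, WithLp.ofLp_sum]

theorem hasGradientAt_softmaxLoss_zero (a : EuclideanSpace ℝ (Fin d)) (b : Fin K) :
    HasGradientAt (softmaxLoss K d a b) (softmaxGradZero K d b a) 0 := by
  have : Nonempty (Fin K) := ⟨b⟩
  have hloss : softmaxLoss K d a b =
      fun x => log (∑ l, exp ⟪blockEmbed l a, x⟫_ℝ) - ⟪blockEmbed b a, x⟫_ℝ := by
    simp only [inner_blockEmbed]; rfl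
  rw [hloss]
  simpa [softmaxGradZero] using
    (hasGradientAt_log_sum_exp_inner_zero fun l : Fin K => blockEmbed l a).sub
      (hasGradientAt_inner _)

theorem hasGradientAt_localCost_zero {J : ℕ} (a : Fin J → EuclideanSpace ℝ (Fin d)) (b : Fin K) :
    HasGradientAt (localCost K d J a fun _ => b)
      (softmaxGradZero K d b ((J : ℝ)⁻¹ • ∑ j, a j)) 0 := by
  rw [LinearMap.map_smul, map_sum]
  exact (HasGradientAt.sum fun j _ => hasGradientAt_softmaxLoss_zero (a j) b).const_mul _

section Average

variable {ι : Type*} {s : Finset ι} {m : ι → EuclideanSpace ℝ (Fin d)} {cls : ι → Fin K} {w : ι}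

theorem softmaxGradZero_sub_avg_apply_self (hw : w ∈ s) (hcls : ∀ v ∈ s, cls v = cls w → v = w)
    (i : Fin d) :
    (softmaxGradZero K d (cls w) (m w) - (#s : ℝ)⁻¹ • ∑ v ∈ s, softmaxGradZero K d (cls v) (m v))
        (cls w, i) =
      -((1 - (#s : ℝ)⁻¹) * (1 - (K : ℝ)⁻¹) * m w i +
        (#s : ℝ)⁻¹ * (K : ℝ)⁻¹ * (∑ v ∈ s, m v i - m w i)) := by
  have hself : ∑ v ∈ s, (if cls w = cls v then m v i else 0) = m w i := by
    rw [sum_eq_single_of_mem w hw fun v hv hvw => if_neg fun h => hvw (hcls v hv h.symm),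
      if_pos rfl]
  simp only [PiLp.sub_apply, PiLp.smul_apply, WithLp.ofLp_sum, Finset.sum_apply,
    softmaxGradZero_apply, smul_eq_mul, sub_mul, ite_mul, one_mul, zero_mul, sum_sub_distrib,
    ← mul_sum, hself, if_true]
  ring

theorem mul_norm_le_norm_softmaxGradZero_sub_avg (hw : w ∈ s)
    (hcls : ∀ v ∈ s, cls v = cls w → v = w) (hm : ∀ v ∈ s, ∀ i, 0 ≤ m v i) :
    (1 - (#s : ℝ)⁻¹) * (1 - (K : ℝ)⁻¹) * ‖m w‖ ≤
      ‖softmaxGradZero K d (cls w) (m w) -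
        (#s : ℝ)⁻¹ • ∑ v ∈ s, softmaxGradZero K d (cls v) (m v)‖ := by
  have hc : 0 ≤ (1 - (#s : ℝ)⁻¹) * (1 - (K : ℝ)⁻¹) :=
    mul_nonneg (sub_nonneg.2 (Nat.cast_inv_le_one _)) (sub_nonneg.2 (Nat.cast_inv_le_one _))
  rw [← abs_of_nonneg hc, ← Real.norm_eq_abs, ← norm_smul]
  refine EuclideanSpace.norm_le_norm_of_abs_le_comp (Prod.mk_right_injective (cls w)) fun i => ?_
  have hmw := hm w hw i
  have hothers : 0 ≤ ∑ v ∈ s, m v i - m w i :=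
    sub_nonneg.2 (single_le_sum (fun v hv => hm v hv i) hw)
  rw [softmaxGradZero_sub_avg_apply_self hw hcls, abs_neg, PiLp.smul_apply, smul_eq_mul,
    abs_of_nonneg (by positivity), abs_of_nonneg (by positivity)]
  exact le_add_of_nonneg_right (by positivity)

end Average

theorem stmt_7_general (K d J Wn : ℕ)
    (Reg : Finset (Fin Wn)) (hReg : Reg.Nonempty)
    (a : Fin Wn → Fin J → EuclideanSpace ℝ (Fin d))
    (cls : Fin Wn → Fin K)
    (hcls : ∀ w ∈ Reg, ∀ w' ∈ Reg, cls w = cls w' → w = w')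
    (ha : ∀ w j i, 0 ≤ a w j i)
    (ξ : ℝ)
    (hξ : ∀ x : EuclideanSpace ℝ (Fin K × Fin d), ∀ w ∈ Reg,
      ‖gradient (localCost K d J (a w) (fun _ => cls w)) x -
          gradient (fun z => (Reg.card : ℝ)⁻¹ *
            ∑ v ∈ Reg, localCost K d J (a v) (fun _ => cls v) z) x‖ ≤ ξ) :
    (1 - (Reg.card : ℝ)⁻¹) * (1 - (K : ℝ)⁻¹) *
      Reg.sup' hReg (fun w => ‖(J : ℝ)⁻¹ • ∑ j : Fin J, a w j‖) ≤ ξ := by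
  obtain ⟨w, hw, hsup⟩ := exists_mem_eq_sup' hReg fun w => ‖(J : ℝ)⁻¹ • ∑ j : Fin J, a w j‖
  have hglobal := (HasGradientAt.sum fun v (_ : v ∈ Reg) =>
    hasGradientAt_localCost_zero (a v) (cls v)).const_mul (#Reg : ℝ)⁻¹
  have hgrad := hξ 0 w hw
  rw [(hasGradientAt_localCost_zero (a w) (cls w)).gradient, hglobal.gradient] at hgrad
  rw [hsup]
  refine le_trans ?_ hgrad
  refine mul_norm_le_norm_softmaxGradZero_sub_avg (m := fun v => (J : ℝ)⁻¹ • ∑ j, a v j) hw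
    (fun v hv h => hcls v hv w hw h) fun v _ i => ?_
  simpa [WithLp.ofLp_sum] using mul_nonneg (by positivity) (sum_nonneg fun j _ => ha v j i)

/-- in distributed softmax regression with non-negative features where each
regular worker `w ∈ Reg` only has samples from one class `cls w` and classes are disjoint
across workers (`cls` injective on `Reg`), any constant `ξ` with
`‖∇f_w(x) − ∇f(x)‖ ≤ ξ` for all `x` and all `w ∈ Reg` satisfies
`ξ ≥ (1 − 1/R)(1 − 1/K) · max_{w ∈ Reg} ‖(1/J) Σ_j a^{(w,j)}‖`. -/
theorem stmt_7 (K d J Wn : ℕ) (hJ : 1 ≤ J)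
    (Reg : Finset (Fin Wn)) (hReg : Reg.Nonempty)
    (a : Fin Wn → Fin J → EuclideanSpace ℝ (Fin d))
    (cls : Fin Wn → Fin K)
    (hcls : ∀ w ∈ Reg, ∀ w' ∈ Reg, cls w = cls w' → w = w')
    (ha : ∀ w j i, 0 ≤ a w j i)
    (ξ : ℝ)
    (hξ : ∀ x : EuclideanSpace ℝ (Fin K × Fin d), ∀ w ∈ Reg,
      ‖gradient (localCost K d J (a w) (fun _ => cls w)) x -
          gradient (fun z => (Reg.card : ℝ)⁻¹ *
            ∑ v ∈ Reg, localCost K d J (a v) (fun _ => cls v) z) x‖ ≤ ξ) :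
    (1 - (Reg.card : ℝ)⁻¹) * (1 - (K : ℝ)⁻¹) *
      Reg.sup' hReg (fun w => ‖(J : ℝ)⁻¹ • ∑ j : Fin J, a w j‖) ≤ ξ :=
  stmt_7_general K d J Wn Reg hReg a cls hcls ha ξ hξ
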